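/- Let Γ = B(G, H, H, D) be a bi-coset graph where H is a maximal, nontrivial, core-free subgroup of the finite group G, and let R(G) denote the right-multiplication action of G on the vertices. If there exists an automorphism ι of Γ that interchanges the two parts and centralizes R(G), then D = D^{-1}. -/

import Mathlib

open QuotientGroup

/-- The bi-coset graph `B(G, L, R, D)`: vertex set is the disjoint union of the sets of
right cosets `[G:L]` and `[G:R]`, with `La` adjacent to `Rb` iff `b·a⁻¹ ∈ D`. -/
def biCosetGraph (G : Type*) [Group G] (L R : Subgroup G) (D : Set G) :
    SimpleGraph (Quotient (rightRel L) ⊕ Quotient (rightRel R)) where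
  Adj u v := ∃ a b : G, b * a⁻¹ ∈ D ∧
    ((u = Sum.inl (Quotient.mk (rightRel L) a) ∧ v = Sum.inr (Quotient.mk (rightRel R) b)) ∨
     (v = Sum.inl (Quotient.mk (rightRel L) a) ∧ u = Sum.inr (Quotient.mk (rightRel R) b)))
  symm := by
    constructor
    rintro u v ⟨a, b, hab, h⟩
    exact ⟨a, b, hab, h.symm⟩
  loopless := by
    constructor
    rintro u ⟨a, b, hab, ⟨h1, h2⟩ | ⟨h1, h2⟩⟩ <;> rw [h1] at h2 <;> cases h2

/-- Right multiplication by `g` on the set of right cosets of `L`. -/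
def rcosetMul {G : Type*} [Group G] (L : Subgroup G) (g : G) :
    Quotient (rightRel L) → Quotient (rightRel L) :=
  Quotient.map' (· * g) (fun x y h => by
    rw [rightRel_apply] at h ⊢
    simpa [mul_assoc] using h)

/-- Let `Γ = B(G, H, H, D)` be a bi-coset graph where `H` is a maximal, nontrivial,
core-free subgroup of the finite group `G` and `D` is a union of `(H,H)`-double
cosets. If there is an automorphism `ι` of `Γ` interchanging the two parts and
centralizing the right-multiplication action of `G`, then `D = D⁻¹`. -/
theorem stmt_18 (G : Type*) [Group G] [Finite G] (H : Subgroup G) (D : Set G)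
    (hD : ∀ r ∈ (H : Set G), ∀ d ∈ D, ∀ l ∈ (H : Set G), r * d * l ∈ D)
    (hmax : IsCoatom H) (hnt : H ≠ ⊥) (hcf : H.normalCore = ⊥)
    (ι : biCosetGraph G H H D ≃g biCosetGraph G H H D)
    (hswap : ∀ q : Quotient (rightRel H),
      (∃ q', ι (Sum.inl q) = Sum.inr q') ∧ (∃ q', ι (Sum.inr q) = Sum.inl q'))
    (hcomm : ∀ (g : G) v,
      ι (Sum.map (rcosetMul H g) (rcosetMul H g) v) =
        Sum.map (rcosetMul H g) (rcosetMul H g) (ι v)) :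
    D⁻¹ = D := by
  classical
  -- The normalizer of H is H itself.
  have hNH : Subgroup.normalizer (H : Set G) = H := by
    rcases (Subgroup.le_normalizer (H := H)).lt_or_eq with hlt | heq
    · exfalso
      have htop : Subgroup.normalizer (H : Set G) = ⊤ := hmax.2 _ hlt
      have : H.Normal := Subgroup.normalizer_eq_top_iff.mp htop
      exact hnt (hcf ▸ (Subgroup.normalCore_eq_self H).symm)
    · exact heq.symm
  -- An element conjugating H into H lies in H.
  have hconj : ∀ σ : G, (∀ h ∈ H, σ * h * σ⁻¹ ∈ H) → σ ∈ H := by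
    intro σ hσ
    have hset := Subgroup.mem_normalizer_fintype (S := (H : Set G)) (x := σ) hσ
    have : σ ∈ Subgroup.normalizer (H : Set G) := Subgroup.mem_normalizer_iff.mpr fun n => hset n
    rwa [hNH] at this
  -- Extract σ and τ with ι(inl [g]) = inr [σg], ι(inr [g]) = inl [τg].
  obtain ⟨⟨qσ, hqσ⟩, -⟩ := hswap (Quotient.mk (rightRel H) 1)
  obtain ⟨-, ⟨qτ, hqτ⟩⟩ := hswap (Quotient.mk (rightRel H) 1)
  obtain ⟨σ, rfl⟩ := Quotient.exists_rep qσ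
  obtain ⟨τ, rfl⟩ := Quotient.exists_rep qτ
  have hL : ∀ g : G, ι (Sum.inl (Quotient.mk (rightRel H) g)) =
      Sum.inr (Quotient.mk (rightRel H) (σ * g)) := by
    intro g
    have := hcomm g (Sum.inl (Quotient.mk (rightRel H) 1))
    simp only [Sum.map_inl, Sum.map_inr] at this
    have h1 : rcosetMul H g (Quotient.mk (rightRel H) 1) = Quotient.mk (rightRel H) g := by
      simp [rcosetMul, Quotient.map'_mk'']
    rw [h1, hqσ] at this
    rw [this]
    simp [rcosetMul, Quotient.map'_mk'']
  have hR : ∀ g : G, ι (Sum.inr (Quotient.mk (rightRel H) g)) =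
      Sum.inl (Quotient.mk (rightRel H) (τ * g)) := by
    intro g
    have := hcomm g (Sum.inr (Quotient.mk (rightRel H) 1))
    simp only [Sum.map_inl, Sum.map_inr] at this
    have h1 : rcosetMul H g (Quotient.mk (rightRel H) 1) = Quotient.mk (rightRel H) g := by
      simp [rcosetMul, Quotient.map'_mk'']
    rw [h1, hqτ] at this
    rw [this]
    simp [rcosetMul, Quotient.map'_mk'']
  -- σ ∈ H : σ conjugates H into H.
  have hσH : σ ∈ H := by
    apply hconj
    intro h hh
    have e1 : (Quotient.mk (rightRel H) h⁻¹) = (Quotient.mk (rightRel H) (1 : G)) :=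
      Quotient.sound' (rightRel_apply.mpr (by simpa using hh))
    have e2 := (hL h⁻¹).symm.trans (by rw [e1, hL 1])
    have e3 := Quotient.exact' (Sum.inr_injective e2)
    rw [rightRel_apply] at e3
    simpa [mul_assoc] using e3
  have hτH : τ ∈ H := by
    apply hconj
    intro h hh
    have e1 : (Quotient.mk (rightRel H) h⁻¹) = (Quotient.mk (rightRel H) (1 : G)) :=
      Quotient.sound' (rightRel_apply.mpr (by simpa using hh))
    have e2 := (hR h⁻¹).symm.trans (by rw [e1, hR 1])
    have e3 := Quotient.exact' (Sum.inl_injective e2)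
    rw [rightRel_apply] at e3
    simpa [mul_assoc] using e3
  -- Main step: d ∈ D → d⁻¹ ∈ D.
  have key : ∀ d ∈ D, d⁻¹ ∈ D := by
    intro d hd
    have hadj : (biCosetGraph G H H D).Adj (Sum.inl (Quotient.mk (rightRel H) 1))
        (Sum.inr (Quotient.mk (rightRel H) d)) :=
      ⟨1, d, by simpa using hd, Or.inl ⟨rfl, rfl⟩⟩
    have hadj2 := ι.map_adj_iff.mpr hadj
    rw [hL 1, hR d, mul_one] at hadj2
    obtain ⟨a, b, hab, ⟨h1, -⟩ | ⟨h1, h2⟩⟩ := hadj2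
    · exact absurd h1 (by simp)
    · -- h1 : inl [τ*d] = inl [a], h2 : inr [σ] = inr [b]
      have ea : τ * d * a⁻¹ ∈ H := by
        have h3 := Quotient.exact' (Sum.inl_injective h1)
        rw [rightRel_apply] at h3
        have h4 := H.inv_mem h3
        rwa [show (a * (τ * d)⁻¹)⁻¹ = τ * d * a⁻¹ by group] at h4
      have eb : b * σ⁻¹ ∈ H := by
        have := Quotient.exact' (Sum.inr_injective h2)
        rw [rightRel_apply] at this
        exact this
      have heq : σ⁻¹ * (b * σ⁻¹)⁻¹ * (b * a⁻¹) * ((τ * d * a⁻¹)⁻¹ * τ) = d⁻¹ := by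
        group
      have := hD _ (H.mul_mem (H.inv_mem hσH) (H.inv_mem eb)) _ hab _
        (H.mul_mem (H.inv_mem ea) hτH)
      rwa [heq] at this
  ext x
  constructor
  · intro hx
    simpa using key _ (Set.mem_inv.mp hx)
  · intro hx
    exact Set.mem_inv.mpr (by simpa using key _ hx)
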